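/- Let G be a group satisfying hypotheses (H1) and (H2). If V ≤ W are infinite virtually cyclic subgroups of G, then V_max = W_max. -/

import Mathlib

/-- A subgroup is infinite cyclic if it is infinite and generated by a single element. -/
def IsInfiniteCyclicSubgroup {G : Type*} [Group G] (C : Subgroup G) : Prop :=
  (∃ g : G, C = Subgroup.zpowers g) ∧ (C : Set G).Infinite

/-- A subgroup is infinite virtually cyclic if it is infinite and contains a cyclic
subgroup of finite index. -/
def IsInfiniteVirtuallyCyclicSubgroup {G : Type*} [Group G] (V : Subgroup G) : Prop :=
  (V : Set G).Infinite ∧ ∃ C : Subgroup V, C.FiniteIndex ∧ IsCyclic C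

/-- `C` is an infinite cyclic subgroup of `V` which is normal in `V`. -/
def IsInfCyclicNormalIn {G : Type*} [Group G] (C V : Subgroup G) : Prop :=
  IsInfiniteCyclicSubgroup C ∧ C ≤ V ∧ ∀ v ∈ V, ∀ c ∈ C, v * c * v⁻¹ ∈ C

/-- `V_max = ⋃ { N_G(C) : C infinite cyclic subgroup of V normal in V }`. -/
def VmaxSet {G : Type*} [Group G] (V : Subgroup G) : Set G :=
  ⋃ C ∈ {C : Subgroup G | IsInfCyclicNormalIn C V}, (Subgroup.normalizer (C : Set G) : Set G)

/-- (H1): every infinite cyclic subgroup has finite index in its centralizer. -/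
def HypH1 (G : Type*) [Group G] : Prop :=
  ∀ C : Subgroup G, IsInfiniteCyclicSubgroup C →
    C.relIndex (Subgroup.centralizer (C : Set G)) ≠ 0

/-- (H2): there is an upper bound on the orders of finite subgroups. -/
def HypH2 (G : Type*) [Group G] : Prop :=
  ∃ b : ℕ, 0 < b ∧ ∀ H : Subgroup G, (H : Set G).Finite → Nat.card H ≤ b

/-! If `C = ⟨z⟩`, every subgroup of `C` is some `⟨z ^ n⟩`, and whatever normalizes `⟨z⟩` also
normalizes `⟨z ^ n⟩`; so `N_G(C) ⊆ N_G(D)` for `D ≤ C`. Hence `V_max ⊆ W_max` as soon as every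
infinite cyclic `C` normal in `V` contains an infinite cyclic subgroup normal in `W`.

In an infinite virtually cyclic group every infinite subgroup has finite index, since it meets the
cyclic subgroup of finite index in a nontrivial, hence finite index, subgroup. So for `C ◁ V` the
normal core of `C` in `W` is still infinite, and for `C ◁ W` so is `C ⊓ V`: these are the required
subgroups in the two directions. -/

namespace Subgroup

variable {G : Type*} [Group G]

theorem zpowers_pow_le_zpowers_pow {w z : G} (h : w ∈ zpowers z) (n : ℕ) :
    zpowers (w ^ n) ≤ zpowers (z ^ n) := by
  obtain ⟨k, rfl⟩ := mem_zpowers_iff.mp h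
  have hcomm : (z ^ k) ^ n = (z ^ n) ^ k := by
    rw [← zpow_natCast, ← zpow_natCast, ← zpow_mul, ← zpow_mul, mul_comm]
  rw [zpowers_le, hcomm]
  exact zpow_mem (mem_zpowers _) k

theorem normalizer_zpowers_le_normalizer {z : G} {D : Subgroup G} (hD : D ≤ zpowers z) :
    normalizer (zpowers z : Set G) ≤ normalizer (D : Set G) := by
  obtain ⟨n, rfl⟩ := (le_zpowers_iff z D).mp hD
  intro g hg
  rw [mem_normalizer_iff_map_conj_eq, MonoidHom.map_zpowers] at hg ⊢
  rw [map_pow]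
  exact le_antisymm (zpowers_pow_le_zpowers_pow (hg ▸ mem_zpowers _) n)
    (zpowers_pow_le_zpowers_pow (hg.symm ▸ mem_zpowers _) n)

theorem relIndex_zpowers_pow_ne_zero (z : G) {n : ℕ} (hn : n ≠ 0) :
    (zpowers (z ^ n)).relIndex (zpowers z) ≠ 0 := by
  -- pull back along `k ↦ z ^ k`, where `⟨z ^ n⟩` becomes a subgroup of `ℤ` containing `nℤ`
  have hle : AddSubgroup.toSubgroup (AddSubgroup.zmultiples (n : ℤ)) ≤
      (zpowers (z ^ n)).comap (zpowersHom G z) := by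
    rintro _ ⟨k, rfl⟩
    refine ⟨k, ?_⟩
    show (z ^ n) ^ k = z ^ (k * (n : ℤ))
    rw [← zpow_natCast, ← zpow_mul, mul_comm]
  rw [← range_zpowersHom z, ← index_comap]
  refine ne_zero_of_dvd_ne_zero ?_ (index_dvd_of_le hle)
  simpa [Int.index_zmultiples] using hn

theorem infinite_of_relIndex_ne_zero {A B : Subgroup G} (h : A.relIndex B ≠ 0)
    (hB : (B : Set G).Infinite) : (A : Set G).Infinite := by
  intro hA
  have : Finite A := hA.to_subtype
  have : Finite (A.subgroupOf B) :=
    Finite.of_injective (fun x => (⟨x.1.1, x.2⟩ : A)) fun x y hxy => by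
      ext; simpa using congrArg Subtype.val hxy
  exact hB (Set.finite_coe_iff.mp
    ((finite_iff_finite_and_finiteIndex (A.subgroupOf B)).mpr ⟨this, ⟨h⟩⟩))

theorem finiteIndex_of_infinite_of_isCyclic {Z K : Subgroup G} [Z.FiniteIndex] [IsCyclic Z]
    (hK : (K : Set G).Infinite) : K.FiniteIndex := by
  obtain ⟨z, rfl⟩ := Z.isCyclic_iff_exists_zpowers_eq_top.mp ‹_›
  have : (zpowers z).IsFiniteRelIndex K := isFiniteRelIndex_of_finiteIndex
  have hinf : ((K ⊓ zpowers z : Subgroup G) : Set G).Infinite :=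
    infinite_of_relIndex_ne_zero (by rw [inf_relIndex_left]; exact relIndex_ne_zero) hK
  obtain ⟨n, hn⟩ := (le_zpowers_iff z _).mp (inf_le_right : K ⊓ zpowers z ≤ zpowers z)
  have hn0 : n ≠ 0 := by
    rintro rfl
    simp [hn] at hinf
  have hindex : (K ⊓ zpowers z).index ≠ 0 := by
    rw [← relIndex_top_right]
    exact relIndex_ne_zero_trans (hn ▸ relIndex_zpowers_pow_ne_zero z hn0)
      (by rw [relIndex_top_right]; exact FiniteIndex.index_ne_zero)
  exact ⟨ne_zero_of_dvd_ne_zero hindex (index_dvd_of_le inf_le_left)⟩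

end Subgroup

section

open Subgroup

variable {G : Type*} [Group G]

theorem IsInfiniteVirtuallyCyclicSubgroup.relIndex_ne_zero {W C : Subgroup G}
    (hW : IsInfiniteVirtuallyCyclicSubgroup W) (hC : (C : Set G).Infinite) (hCW : C ≤ W) :
    C.relIndex W ≠ 0 := by
  obtain ⟨-, Z, hZ, hZc⟩ := hW
  have hCW' : ((C.subgroupOf W : Subgroup W) : Set W).Infinite := by
    rw [← Set.infinite_coe_iff] at hC ⊢
    exact (subgroupOfEquivOfLe hCW).toEquiv.infinite_iff.mpr hC
  exact (finiteIndex_of_infinite_of_isCyclic (Z := Z) hCW').index_ne_zero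

theorem IsInfiniteCyclicSubgroup.of_le {C D : Subgroup G} (hC : IsInfiniteCyclicSubgroup C)
    (hDC : D ≤ C) (hD : (D : Set G).Infinite) : IsInfiniteCyclicSubgroup D := by
  obtain ⟨⟨z, rfl⟩, -⟩ := hC
  obtain ⟨g, hg⟩ := D.isCyclic_iff_exists_zpowers_eq_top.mp (isCyclic_of_le hDC)
  exact ⟨⟨g, hg.symm⟩, hD⟩

theorem exists_le_isInfCyclicNormalIn {C W : Subgroup G}
    (hW : IsInfiniteVirtuallyCyclicSubgroup W) (hC : IsInfiniteCyclicSubgroup C) (hCW : C ≤ W) :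
    ∃ D ≤ C, IsInfCyclicNormalIn D W := by
  have : (C.subgroupOf W).FiniteIndex := ⟨hW.relIndex_ne_zero hC.2 hCW⟩
  set N := (C.subgroupOf W).normalCore
  have hN : (N.map W.subtype).subgroupOf W = N :=
    comap_map_eq_self_of_injective W.subtype_injective N
  have hNC : N.map W.subtype ≤ C :=
    calc N.map W.subtype ≤ (C.subgroupOf W).map W.subtype := map_mono (normalCore_le _)
      _ = C ⊓ W := subgroupOf_map_subtype C W
      _ ≤ C := inf_le_left
  have hNW : N.map W.subtype ≤ W := map_subtype_le N
  have hinf : ((N.map W.subtype : Subgroup G) : Set G).Infinite :=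
    infinite_of_relIndex_ne_zero (by rw [relIndex, hN]; exact FiniteIndex.index_ne_zero) hW.1
  refine ⟨N.map W.subtype, hNC, hC.of_le hNC hinf, hNW, ?_⟩
  have hnormal : ((N.map W.subtype).subgroupOf W).Normal := by
    rw [hN]; exact normalCore_normal _
  exact fun v hv c hc => (normal_subgroupOf_iff hNW).mp hnormal c v hc hv

theorem IsInfCyclicNormalIn.inf_of_le {C V W : Subgroup G}
    (hW : IsInfiniteVirtuallyCyclicSubgroup W) (hC : IsInfCyclicNormalIn C W)
    (hV : (V : Set G).Infinite) (hVW : V ≤ W) : IsInfCyclicNormalIn (C ⊓ V) V := by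
  obtain ⟨hCcyc, hCW, hCnormal⟩ := hC
  have hCV : C.relIndex V ≠ 0 :=
    mt (relIndex_eq_zero_of_le_right hVW) (hW.relIndex_ne_zero hCcyc.2 hCW)
  have hinf := infinite_of_relIndex_ne_zero (inf_relIndex_right C V ▸ hCV) hV
  refine ⟨hCcyc.of_le inf_le_left hinf, inf_le_right, fun v hv c hc => ?_⟩
  exact mem_inf.mpr ⟨hCnormal v (hVW hv) c hc.1, V.mul_mem (V.mul_mem hv hc.2) (V.inv_mem hv)⟩

theorem vmaxSet_subset {V W : Subgroup G}
    (h : ∀ C, IsInfCyclicNormalIn C V → ∃ D ≤ C, IsInfCyclicNormalIn D W) :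
    VmaxSet V ⊆ VmaxSet W := by
  simp only [VmaxSet, Set.subset_def, Set.mem_iUnion₂]
  rintro g ⟨C, hC, hg⟩
  obtain ⟨D, hDC, hD⟩ := h C hC
  obtain ⟨⟨z, rfl⟩, -⟩ := hC.1
  exact ⟨D, hD, normalizer_zpowers_le_normalizer hDC hg⟩

end

theorem vmax_eq_of_le_general
    {G : Type*} [Group G]
    (V W : Subgroup G) (hV : IsInfiniteVirtuallyCyclicSubgroup V)
    (hW : IsInfiniteVirtuallyCyclicSubgroup W) (hVW : V ≤ W) :
    VmaxSet V = VmaxSet W :=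
  (vmaxSet_subset fun _ hC => exists_le_isInfCyclicNormalIn hW hC.1 (hC.2.1.trans hVW)).antisymm
    (vmaxSet_subset fun C hC => ⟨C ⊓ V, inf_le_left, hC.inf_of_le hW hV.1 hVW⟩)

/-- For a group satisfying (H1) and (H2): if `V ≤ W` are infinite virtually cyclic
subgroups of `G`, then `V_max = W_max`. -/
theorem vmax_eq_of_le
    {G : Type*} [Group G] (h1 : HypH1 G) (h2 : HypH2 G)
    (V W : Subgroup G) (hV : IsInfiniteVirtuallyCyclicSubgroup V)
    (hW : IsInfiniteVirtuallyCyclicSubgroup W) (hVW : V ≤ W) :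
    VmaxSet V = VmaxSet W :=
  vmax_eq_of_le_general V W hV hW hVW
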